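/- arXiv:1907.07470 — 7 statements merged into one kernel-verified Lean document; each statement's English description precedes it below -/
import Mathlib

section
/- Let α > 0, μ < 0, β, h ∈ ℝ, and set s₀ = (αh - β)/(√(-μ)(1+α²)) and Ω₀ = (h + αβ)/(1+α²). Then the functions θ₀(ξ) = 2·arctan(e^{√(-μ)·ξ}), p₀(ξ) = √(-μ), q₀(ξ) = 0 solve the desingularized coherent structure system θ' = sin(θ)·p, p' = h - Ω₀ - α s₀ p + s₀ q - (p² - q² + μ)·cos(θ), q' = α Ω₀ - β - s₀ p - α s₀ q - 2 p q cos(θ) (i.e. the system with c_cp = 0). -/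
/-!
The profile `θ₀ = 2 arctan (e^{cξ})` with `c = √(-μ)` solves the pendulum-type equation
`θ' = c sin θ`, since `sin (2 arctan x) = 2x / (1 + x²)` is exactly the factor produced by
differentiating. With `p ≡ c`, `q ≡ 0` the anisotropy term `p² - q² + μ` vanishes, so the
`p'` and `q'` equations reduce to the linear system `h - Ω = α s c`, `α Ω - β = s c`, whose
unique solution is the stated pair `(s₀, Ω₀)`.
-/

open Real

theorem Real.sin_two_mul_arctan (x : ℝ) : sin (2 * arctan x) = 2 * x / (1 + x ^ 2) := by
  have hpos : 0 < 1 + x ^ 2 := by positivity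
  rw [sin_two_mul, sin_arctan, cos_arctan]
  field_simp
  rw [sq_sqrt hpos.le]

theorem hasDerivAt_two_mul_arctan_exp (c ξ : ℝ) :
    HasDerivAt (fun ξ ↦ 2 * arctan (exp (c * ξ))) (sin (2 * arctan (exp (c * ξ))) * c) ξ := by
  have hexp : HasDerivAt (fun ξ ↦ exp (c * ξ)) (exp (c * ξ) * c) ξ := by
    simpa using ((hasDerivAt_id ξ).const_mul c).exp
  refine ((hasDerivAt_arctan _).comp ξ hexp |>.const_mul 2).congr_deriv ?_
  rw [sin_two_mul_arctan]
  field_simp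

theorem domainWall_speed_frequency_balance {α β h c s Ω : ℝ} (hc : c ≠ 0)
    (hs : s = (α * h - β) / (c * (1 + α ^ 2))) (hΩ : Ω = (h + α * β) / (1 + α ^ 2)) :
    h - Ω - α * s * c = 0 ∧ α * Ω - β - s * c = 0 := by
  have hα : 1 + α ^ 2 ≠ 0 := by positivity
  subst hs hΩ
  constructor <;> field_simp <;> ring

theorem homogeneous_DW_solves_coherent_system_general (α β h μ s₀ Ω₀ : ℝ)
    (hμ : μ < 0)
    (hs : s₀ = (α * h - β) / (Real.sqrt (-μ) * (1 + α ^ 2)))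
    (hΩ : Ω₀ = (h + α * β) / (1 + α ^ 2)) :
    ∀ ξ : ℝ,
      HasDerivAt (fun ξ : ℝ => 2 * Real.arctan (Real.exp (Real.sqrt (-μ) * ξ)))
        (Real.sin (2 * Real.arctan (Real.exp (Real.sqrt (-μ) * ξ))) * Real.sqrt (-μ)) ξ ∧
      HasDerivAt (fun _ : ℝ => Real.sqrt (-μ))
        (h - Ω₀ - α * s₀ * Real.sqrt (-μ) + s₀ * 0
          - (Real.sqrt (-μ) ^ 2 - 0 ^ 2 + μ)
            * Real.cos (2 * Real.arctan (Real.exp (Real.sqrt (-μ) * ξ)))) ξ ∧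
      HasDerivAt (fun _ : ℝ => (0 : ℝ))
        (α * Ω₀ - β - s₀ * Real.sqrt (-μ) - α * s₀ * 0
          - 2 * Real.sqrt (-μ) * 0
            * Real.cos (2 * Real.arctan (Real.exp (Real.sqrt (-μ) * ξ)))) ξ := by
  intro ξ
  have hc : √(-μ) ≠ 0 := (sqrt_pos.mpr (neg_pos.mpr hμ)).ne'
  have hanisotropy : √(-μ) ^ 2 - 0 ^ 2 + μ = 0 := by
    rw [sq_sqrt (neg_nonneg.mpr hμ.le)]; ring
  obtain ⟨hp, hq⟩ := domainWall_speed_frequency_balance hc hs hΩ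
  refine ⟨hasDerivAt_two_mul_arctan_exp _ ξ, ?_, ?_⟩
  · exact (hasDerivAt_const ξ _).congr_deriv (by rw [hanisotropy]; linear_combination -hp)
  · exact (hasDerivAt_const ξ _).congr_deriv (by linear_combination -hq)

/-- The explicit homogeneous domain wall `θ₀(ξ) = 2 arctan(e^{√(-μ)ξ})`,
`p₀ ≡ √(-μ)`, `q₀ ≡ 0` solves the desingularized coherent structure system of
the LLGS equation with `c_cp = 0`, with speed `s₀ = (αh - β)/(√(-μ)(1+α²))` and
frequency `Ω₀ = (h + αβ)/(1+α²)`. -/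
theorem homogeneous_DW_solves_coherent_system (α β h μ s₀ Ω₀ : ℝ)
    (hα : 0 < α) (hμ : μ < 0)
    (hs : s₀ = (α * h - β) / (Real.sqrt (-μ) * (1 + α ^ 2)))
    (hΩ : Ω₀ = (h + α * β) / (1 + α ^ 2)) :
    ∀ ξ : ℝ,
      HasDerivAt (fun ξ : ℝ => 2 * Real.arctan (Real.exp (Real.sqrt (-μ) * ξ)))
        (Real.sin (2 * Real.arctan (Real.exp (Real.sqrt (-μ) * ξ))) * Real.sqrt (-μ)) ξ ∧
      HasDerivAt (fun _ : ℝ => Real.sqrt (-μ))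
        (h - Ω₀ - α * s₀ * Real.sqrt (-μ) + s₀ * 0
          - (Real.sqrt (-μ) ^ 2 - 0 ^ 2 + μ)
            * Real.cos (2 * Real.arctan (Real.exp (Real.sqrt (-μ) * ξ)))) ξ ∧
      HasDerivAt (fun _ : ℝ => (0 : ℝ))
        (α * Ω₀ - β - s₀ * Real.sqrt (-μ) - α * s₀ * 0
          - 2 * Real.sqrt (-μ) * 0
            * Real.cos (2 * Real.arctan (Real.exp (Real.sqrt (-μ) * ξ)))) ξ :=
  homogeneous_DW_solves_coherent_system_general α β h μ s₀ Ω₀ hμ hs hΩ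
end

section
/- Suppose Ω = β⁻/α + s²/2 where β⁻ = β/(1 - c_cp). Then along any solution (p(ξ), q(ξ)) of the planar system p' = p² - q² - αsp + sq + h + μ - β⁻/α - s²/2, q' = 2pq - sp - αsq + αs²/2 with q(ξ) ≠ s/2 for all ξ, the function H(p,q) = (p² + q² - αsp - sq + h - β⁻/α + μ)/(q - s/2) is constant. -/
/-!
Write `D = q - s/2` and `N = p² + q² - αsp - sq + e` with `e = h + μ - β⁻/α`, so that `H = N/D`.
The system reads `q' = (2p - αs) D` and `p' = N - 2D²`, hence
`N' D = ((2p - αs) p' + 2D q') D = (p' + 2D²) q' = N q'`: the Wronskian of `N` and `D` vanishes,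
and so does the derivative of `N/D`.
-/

theorem div_eq_div_of_hasDerivAt_of_mul_eq_mul {f g f' g' : ℝ → ℝ}
    (hf : ∀ x, HasDerivAt f (f' x) x) (hg : ∀ x, HasDerivAt g (g' x) x)
    (hg0 : ∀ x, g x ≠ 0) (hW : ∀ x, f' x * g x = f x * g' x) (x y : ℝ) :
    f x / g x = f y / g y := by
  have hderiv : ∀ z, HasDerivAt (fun z => f z / g z) 0 z := fun z =>
    ((hf z).div (hg z) (hg0 z)).congr_deriv (by rw [hW, sub_self, zero_div])
  exact is_const_of_deriv_eq_zero (fun z => (hderiv z).differentiableAt)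
    (fun z => (hderiv z).deriv) x y

theorem pi_chart_quotient_const (α s e : ℝ) {p q : ℝ → ℝ}
    (hp : ∀ ξ, HasDerivAt p
      (p ξ ^ 2 - q ξ ^ 2 - α * s * p ξ + s * q ξ + e - s ^ 2 / 2) ξ)
    (hq : ∀ ξ, HasDerivAt q (2 * p ξ * q ξ - s * p ξ - α * s * q ξ + α * s ^ 2 / 2) ξ)
    (hne : ∀ ξ, q ξ ≠ s / 2) (ξ₁ ξ₂ : ℝ) :
    (p ξ₁ ^ 2 + q ξ₁ ^ 2 - α * s * p ξ₁ - s * q ξ₁ + e) / (q ξ₁ - s / 2)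
      = (p ξ₂ ^ 2 + q ξ₂ ^ 2 - α * s * p ξ₂ - s * q ξ₂ + e) / (q ξ₂ - s / 2) := by
  set P : ℝ → ℝ := fun ξ => p ξ ^ 2 - q ξ ^ 2 - α * s * p ξ + s * q ξ + e - s ^ 2 / 2
  set Q : ℝ → ℝ := fun ξ => 2 * p ξ * q ξ - s * p ξ - α * s * q ξ + α * s ^ 2 / 2
  have hN : ∀ ξ, HasDerivAt (fun ξ => p ξ ^ 2 + q ξ ^ 2 - α * s * p ξ - s * q ξ + e)
      ((2 * p ξ - α * s) * P ξ + (2 * q ξ - s) * Q ξ) ξ := fun ξ =>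
    (((((hp ξ).pow 2).add ((hq ξ).pow 2)).sub ((hp ξ).const_mul (α * s))).sub
      ((hq ξ).const_mul s)).add_const e |>.congr_deriv (by ring)
  refine div_eq_div_of_hasDerivAt_of_mul_eq_mul hN (fun ξ => (hq ξ).sub_const (s / 2))
    (fun ξ => sub_ne_zero.mpr (hne ξ)) (fun ξ => ?_) ξ₁ ξ₂
  ring

theorem hamiltonian_constant_on_pi_chart_general (α β μ h s c_cp : ℝ)
    (p q : ℝ → ℝ)
    (hp : ∀ ξ : ℝ, HasDerivAt p
      ((p ξ) ^ 2 - (q ξ) ^ 2 - α * s * p ξ + s * q ξ + h + μ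
        - (β / (1 - c_cp)) / α - s ^ 2 / 2) ξ)
    (hq : ∀ ξ : ℝ, HasDerivAt q
      (2 * p ξ * q ξ - s * p ξ - α * s * q ξ + α * s ^ 2 / 2) ξ)
    (hne : ∀ ξ : ℝ, q ξ ≠ s / 2) :
    ∀ ξ₁ ξ₂ : ℝ,
      ((p ξ₁) ^ 2 + (q ξ₁) ^ 2 - α * s * p ξ₁ - s * q ξ₁ + h
          - (β / (1 - c_cp)) / α + μ) / (q ξ₁ - s / 2)
        = ((p ξ₂) ^ 2 + (q ξ₂) ^ 2 - α * s * p ξ₂ - s * q ξ₂ + h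
          - (β / (1 - c_cp)) / α + μ) / (q ξ₂ - s / 2) := by
  intro ξ₁ ξ₂
  have hconst := pi_chart_quotient_const α s (h + μ - β / (1 - c_cp) / α)
    (fun ξ => (hp ξ).congr_deriv (by ring)) hq hne ξ₁ ξ₂
  convert hconst using 2 <;> ring

/-- In the center case `Ω = β⁻/α + s²/2` (with `β⁻ = β/(1 - c_cp)`), the function
`H(p,q) = (p² + q² - αsp - sq + h - β⁻/α + μ)/(q - s/2)` is constant along every
solution of the planar chart system which avoids the line `q = s/2`. -/
theorem hamiltonian_constant_on_pi_chart (α β μ h s c_cp : ℝ)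
    (hα : 0 < α) (hβ : 0 ≤ β) (hc : c_cp ∈ Set.Ioo (-1 : ℝ) 1)
    (p q : ℝ → ℝ)
    (hp : ∀ ξ : ℝ, HasDerivAt p
      ((p ξ) ^ 2 - (q ξ) ^ 2 - α * s * p ξ + s * q ξ + h + μ
        - (β / (1 - c_cp)) / α - s ^ 2 / 2) ξ)
    (hq : ∀ ξ : ℝ, HasDerivAt q
      (2 * p ξ * q ξ - s * p ξ - α * s * q ξ + α * s ^ 2 / 2) ξ)
    (hne : ∀ ξ : ℝ, q ξ ≠ s / 2) :
    ∀ ξ₁ ξ₂ : ℝ,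
      ((p ξ₁) ^ 2 + (q ξ₁) ^ 2 - α * s * p ξ₁ - s * q ξ₁ + h
          - (β / (1 - c_cp)) / α + μ) / (q ξ₁ - s / 2)
        = ((p ξ₂) ^ 2 + (q ξ₂) ^ 2 - α * s * p ξ₂ - s * q ξ₂ + h
          - (β / (1 - c_cp)) / α + μ) / (q ξ₂ - s / 2) :=
  hamiltonian_constant_on_pi_chart_general α β μ h s c_cp p q hp hq hne
end

section
/- Let α > 0, μ < 0, β, h ∈ ℝ, s₀ = (αh - β)/(√(-μ)(1+α²)), Ω₀ = (h + αβ)/(1+α²). The Jacobian of the desingularized coherent structure system (with c_cp = 0, s = s₀, Ω = Ω₀) at the equilibrium E⁰ = (0, √(-μ), 0) has eigenvalues √(-μ) and -αs₀ - 2√(-μ) ± i s₀, while at E^π = (π, √(-μ), 0) it has eigenvalues -√(-μ) and -αs₀ + 2√(-μ) ± i s₀. -/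
open Real

/-! At both equilibria `sin θ = 0` and `q = 0`, so the Jacobian decouples the `θ`-direction
(eigenvalue `p cos θ`) from a `(p, q)`-block of the form `b • 1 + s • (rotation by π/2)`,
whose eigenvalues are `b ± i s` with `b = -α s - 2 p cos θ`. -/

noncomputable def jacobian {n : ℕ} (f : (Fin n → ℝ) → Fin n → ℝ) (x : Fin n → ℝ) :
    Matrix (Fin n) (Fin n) ℝ :=
  fun i j => fderiv ℝ (fun u => f u i) x (Pi.single j 1)

theorem Matrix.spectrum_map_ofReal_fin_three_rotation (a b s : ℝ) :
    spectrum ℂ ((!![a, 0, 0; 0, b, s; 0, -s, b] : Matrix (Fin 3) (Fin 3) ℝ).map Complex.ofReal) =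
      {(a : ℂ), (b : ℂ) + s * Complex.I, (b : ℂ) - s * Complex.I} := by
  ext z
  have hcharpoly : (Matrix.scalar (Fin 3) z -
      (!![a, 0, 0; 0, b, s; 0, -s, b] : Matrix (Fin 3) (Fin 3) ℝ).map Complex.ofReal).det
      = (z - a) * (z - (b + s * Complex.I)) * (z - (b - s * Complex.I)) := by
    simp [Matrix.det_fin_three]
    linear_combination (z - a) * (s : ℂ) ^ 2 * Complex.I_sq
  simp only [Matrix.mem_spectrum_iff_isRoot_charpoly, Polynomial.IsRoot.def, Matrix.eval_charpoly,
    hcharpoly, mul_eq_zero, sub_eq_zero, Set.mem_insert_iff, Set.mem_singleton_iff, or_assoc]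

section CoherentStructure

variable (α β h μ s Ω : ℝ)

noncomputable def coherentField (u : Fin 3 → ℝ) : Fin 3 → ℝ :=
  ![sin (u 0) * u 1,
    h - Ω - α * s * u 1 + s * u 2 - (u 1 ^ 2 - u 2 ^ 2 + μ) * cos (u 0),
    α * Ω - β - s * u 1 - α * s * u 2 - 2 * u 1 * u 2 * cos (u 0)]

theorem jacobian_coherentField (x : Fin 3 → ℝ) :
    jacobian (coherentField α β h μ s Ω) x =
      !![x 1 * cos (x 0), sin (x 0), 0;
        (x 1 ^ 2 - x 2 ^ 2 + μ) * sin (x 0), -α * s - 2 * x 1 * cos (x 0), s + 2 * x 2 * cos (x 0);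
        2 * x 1 * x 2 * sin (x 0), -s - 2 * x 2 * cos (x 0), -α * s - 2 * x 1 * cos (x 0)] := by
  have hθ := hasFDerivAt_apply (𝕜 := ℝ) 0 x
  have hp := hasFDerivAt_apply (𝕜 := ℝ) 1 x
  have hq := hasFDerivAt_apply (𝕜 := ℝ) 2 x
  have row0 : HasFDerivAt (fun u => coherentField α β h μ s Ω u 0) _ x := hθ.sin.mul hp
  have row1 : HasFDerivAt (fun u => coherentField α β h μ s Ω u 1) _ x :=
    (((hp.const_mul (α * s)).const_sub (h - Ω)).add (hq.const_mul s)).sub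
      ((((hp.pow 2).sub (hq.pow 2)).add_const μ).mul hθ.cos)
  have row2 : HasFDerivAt (fun u => coherentField α β h μ s Ω u 2) _ x :=
    (((hp.const_mul s).const_sub (α * Ω - β)).sub (hq.const_mul (α * s))).sub
      (((hp.const_mul 2).mul hq).mul hθ.cos)
  ext i j
  fin_cases i <;> fin_cases j <;>
    simp [jacobian, row0.fderiv, row1.fderiv, row2.fderiv] <;> ring

theorem jacobian_coherentField_of_sin_eq_zero {θ : ℝ} (hθ : sin θ = 0) (p : ℝ) :
    jacobian (coherentField α β h μ s Ω) ![θ, p, 0] =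
      !![p * cos θ, 0, 0; 0, -α * s - 2 * p * cos θ, s; 0, -s, -α * s - 2 * p * cos θ] := by
  rw [jacobian_coherentField]
  ext i j
  fin_cases i <;> fin_cases j <;> simp [hθ]

end CoherentStructure

theorem jacobian_eigenvalues_at_equilibria_general (α β h μ s₀ Ω₀ : ℝ)
    (f : (Fin 3 → ℝ) → Fin 3 → ℝ)
    (hf : f = fun u => ![Real.sin (u 0) * u 1,
      h - Ω₀ - α * s₀ * u 1 + s₀ * u 2 - ((u 1) ^ 2 - (u 2) ^ 2 + μ) * Real.cos (u 0),
      α * Ω₀ - β - s₀ * u 1 - α * s₀ * u 2 - 2 * u 1 * u 2 * Real.cos (u 0)])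
    (J : (Fin 3 → ℝ) → Matrix (Fin 3) (Fin 3) ℝ)
    (hJ : J = fun x i j => fderiv ℝ (fun u => f u i) x (Pi.single j 1)) :
    spectrum ℂ ((J ![0, Real.sqrt (-μ), 0]).map (Complex.ofReal))
      = {(Real.sqrt (-μ) : ℂ),
         ((-α * s₀ - 2 * Real.sqrt (-μ) : ℝ) : ℂ) + (s₀ : ℂ) * Complex.I,
         ((-α * s₀ - 2 * Real.sqrt (-μ) : ℝ) : ℂ) - (s₀ : ℂ) * Complex.I} ∧
    spectrum ℂ ((J ![Real.pi, Real.sqrt (-μ), 0]).map (Complex.ofReal))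
      = {(-(Real.sqrt (-μ)) : ℂ),
         ((-α * s₀ + 2 * Real.sqrt (-μ) : ℝ) : ℂ) + (s₀ : ℂ) * Complex.I,
         ((-α * s₀ + 2 * Real.sqrt (-μ) : ℝ) : ℂ) - (s₀ : ℂ) * Complex.I} := by
  have hJ' : J = jacobian (coherentField α β h μ s₀ Ω₀) := by
    subst hf
    exact hJ
  have hE0 := jacobian_coherentField_of_sin_eq_zero α β h μ s₀ Ω₀ sin_zero (Real.sqrt (-μ))
  have hEπ := jacobian_coherentField_of_sin_eq_zero α β h μ s₀ Ω₀ sin_pi (Real.sqrt (-μ))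
  simp only [cos_zero, cos_pi, mul_one, mul_neg, sub_neg_eq_add] at hE0 hEπ
  rw [hJ', hE0, hEπ, Matrix.spectrum_map_ofReal_fin_three_rotation,
    Matrix.spectrum_map_ofReal_fin_three_rotation]
  exact ⟨rfl, by rw [Complex.ofReal_neg]⟩

/-- Eigenvalues of the Jacobian of the desingularized coherent structure system
(with `c_cp = 0`, `s = s₀`, `Ω = Ω₀`) at the equilibria `E⁰ = (0, √(-μ), 0)` and
`E^π = (π, √(-μ), 0)`: at `E⁰` they are `√(-μ)` and `-αs₀ - 2√(-μ) ± i s₀`, and at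
`E^π` they are `-√(-μ)` and `-αs₀ + 2√(-μ) ± i s₀`. -/
theorem jacobian_eigenvalues_at_equilibria (α β h μ s₀ Ω₀ : ℝ)
    (hα : 0 < α) (hμ : μ < 0)
    (hs : s₀ = (α * h - β) / (Real.sqrt (-μ) * (1 + α ^ 2)))
    (hΩ : Ω₀ = (h + α * β) / (1 + α ^ 2))
    (f : (Fin 3 → ℝ) → Fin 3 → ℝ)
    (hf : f = fun u => ![Real.sin (u 0) * u 1,
      h - Ω₀ - α * s₀ * u 1 + s₀ * u 2 - ((u 1) ^ 2 - (u 2) ^ 2 + μ) * Real.cos (u 0),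
      α * Ω₀ - β - s₀ * u 1 - α * s₀ * u 2 - 2 * u 1 * u 2 * Real.cos (u 0)])
    (J : (Fin 3 → ℝ) → Matrix (Fin 3) (Fin 3) ℝ)
    (hJ : J = fun x i j => fderiv ℝ (fun u => f u i) x (Pi.single j 1)) :
    spectrum ℂ ((J ![0, Real.sqrt (-μ), 0]).map (Complex.ofReal))
      = {(Real.sqrt (-μ) : ℂ),
         ((-α * s₀ - 2 * Real.sqrt (-μ) : ℝ) : ℂ) + (s₀ : ℂ) * Complex.I,
         ((-α * s₀ - 2 * Real.sqrt (-μ) : ℝ) : ℂ) - (s₀ : ℂ) * Complex.I} ∧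
    spectrum ℂ ((J ![Real.pi, Real.sqrt (-μ), 0]).map (Complex.ofReal))
      = {(-(Real.sqrt (-μ)) : ℂ),
         ((-α * s₀ + 2 * Real.sqrt (-μ) : ℝ) : ℂ) + (s₀ : ℂ) * Complex.I,
         ((-α * s₀ + 2 * Real.sqrt (-μ) : ℝ) : ℂ) - (s₀ : ℂ) * Complex.I} :=
  jacobian_eigenvalues_at_equilibria_general α β h μ s₀ Ω₀ f hf J hJ
end

section
/- For α > 0, μ < 0, the equilibrium E^π = (π, √(-μ), 0) of the desingularized coherent structure system (c_cp = 0, s = s₀, Ω = Ω₀) has a three-dimensional stable eigenspace (all eigenvalues of the Jacobian have negative real part) if and only if s₀ > 2√(-μ)/α, equivalently h > β/α - 2μ - 2μ/α². -/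
open Real

/-! The eigenvalue `-√(-μ)` is always stable and the complex pair shares the real part
`-α s₀ + 2√(-μ)`, so stability is the sign of that real part. For the equivalence with the
condition on `h`, clear denominators in `s₀` using `√(-μ)² = -μ`. -/

lemma Complex.forall_re_neg_triple_iff {r a s : ℝ} (hr : 0 < r) :
    (∀ z ∈ ({(-r : ℂ), (a : ℂ) + (s : ℂ) * Complex.I, (a : ℂ) - (s : ℂ) * Complex.I} :
      Set ℂ), z.re < 0) ↔ a < 0 := by
  constructor
  · intro H
    simpa using H ((a : ℂ) + (s : ℂ) * Complex.I) (by simp)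
  · rintro ha z (rfl | rfl | rfl) <;> simp [ha, hr]

lemma neg_mul_add_neg_iff_div_lt {α s r : ℝ} (hα : 0 < α) :
    -α * s + r < 0 ↔ r / α < s := by
  rw [div_lt_iff₀ hα]
  constructor <;> intro h <;> linarith

lemma two_sqrt_neg_div_lt_iff {α β h μ : ℝ} (hα : 0 < α) (hμ : μ < 0) :
    2 * √(-μ) / α < (α * h - β) / (√(-μ) * (1 + α ^ 2)) ↔
      β / α - 2 * μ - 2 * μ / α ^ 2 < h := by
  have hr : 0 < √(-μ) := Real.sqrt_pos.mpr (by linarith)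
  have hr2 : √(-μ) ^ 2 = -μ := Real.sq_sqrt (by linarith)
  have lhs : 2 * √(-μ) * (√(-μ) * (1 + α ^ 2)) = -2 * μ * (1 + α ^ 2) := by
    linear_combination (2 * (1 + α ^ 2)) * hr2
  have rhs : β / α - 2 * μ - 2 * μ / α ^ 2 = (β * α - 2 * μ * (1 + α ^ 2)) / α ^ 2 := by
    field_simp
    ring
  rw [div_lt_div_iff₀ hα (by positivity), lhs, rhs, div_lt_iff₀ (by positivity)]
  constructor <;> intro H <;> linarith

theorem Epi_three_dim_stable_iff_general (α β h μ s₀ : ℝ)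
    (hα : 0 < α) (hμ : μ < 0)
    (hs : s₀ = (α * h - β) / (Real.sqrt (-μ) * (1 + α ^ 2))) :
    ((∀ z ∈ ({(-(Real.sqrt (-μ)) : ℂ),
        ((-α * s₀ + 2 * Real.sqrt (-μ) : ℝ) : ℂ) + (s₀ : ℂ) * Complex.I,
        ((-α * s₀ + 2 * Real.sqrt (-μ) : ℝ) : ℂ) - (s₀ : ℂ) * Complex.I} : Set ℂ),
        z.re < 0) ↔ s₀ > 2 * Real.sqrt (-μ) / α) ∧
    (s₀ > 2 * Real.sqrt (-μ) / α ↔ h > β / α - 2 * μ - 2 * μ / α ^ 2) := by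
  have hr : 0 < √(-μ) := Real.sqrt_pos.mpr (by linarith)
  refine ⟨?_, ?_⟩
  · rw [Complex.forall_re_neg_triple_iff hr, neg_mul_add_neg_iff_div_lt hα, gt_iff_lt]
  · rw [hs]
    exact two_sqrt_neg_div_lt_iff hα hμ

/-- For `α > 0`, `μ < 0`, the equilibrium `E^π` of the desingularized coherent
structure system has all three Jacobian eigenvalues `-√(-μ)` and
`-αs₀ + 2√(-μ) ± i s₀` with negative real part if and only if `s₀ > 2√(-μ)/α`,
equivalently `h > β/α - 2μ - 2μ/α²`. -/
theorem Epi_three_dim_stable_iff (α β h μ s₀ : ℝ)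
    (hα : 0 < α) (hβ : 0 ≤ β) (hμ : μ < 0) (hh : β / α ≤ h)
    (hs : s₀ = (α * h - β) / (Real.sqrt (-μ) * (1 + α ^ 2))) :
    ((∀ z ∈ ({(-(Real.sqrt (-μ)) : ℂ),
        ((-α * s₀ + 2 * Real.sqrt (-μ) : ℝ) : ℂ) + (s₀ : ℂ) * Complex.I,
        ((-α * s₀ + 2 * Real.sqrt (-μ) : ℝ) : ℂ) - (s₀ : ℂ) * Complex.I} : Set ℂ),
        z.re < 0) ↔ s₀ > 2 * Real.sqrt (-μ) / α) ∧
    (s₀ > 2 * Real.sqrt (-μ) / α ↔ h > β / α - 2 * μ - 2 * μ / α ^ 2) :=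
  Epi_three_dim_stable_iff_general α β h μ s₀ hα hμ hs
end

section
/- Let α > 0 and ρ = e^{π/α} - e^{-π/α}. The binary quadratic form Q(s,h) = -[(1+α²)²(4+α²)π²/(α³ρ²√(-μ))]·s² - [2(1+α²)(2+α²)π²/(α²ρ²μ)]·s·h + [(1+α²)π²/(αρ²μ√(-μ))]·h² with μ < 0 is negative definite; in particular Q(s,h) = 0 implies s = h = 0. -/
/-- The leading-order quadratic form of the energy difference in the center case,
`Q(s,h) = -[(1+α²)²(4+α²)π²/(α³ρ²√(-μ))]s² - [2(1+α²)(2+α²)π²/(α²ρ²μ)]sh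
 + [(1+α²)π²/(αρ²μ√(-μ))]h²` with `ρ = e^{π/α} - e^{-π/α}`, `α > 0`, `μ < 0`,
is negative definite; in particular `Q(s,h) = 0` implies `s = h = 0`. -/
theorem center_quadratic_form_negative_definite (α μ : ℝ) (hα : 0 < α) (hμ : μ < 0) :
    (∀ s h : ℝ, ¬(s = 0 ∧ h = 0) →
      -((1 + α ^ 2) ^ 2 * (4 + α ^ 2) * Real.pi ^ 2
          / (α ^ 3 * (Real.exp (Real.pi / α) - Real.exp (-Real.pi / α)) ^ 2
            * Real.sqrt (-μ))) * s ^ 2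
        - (2 * (1 + α ^ 2) * (2 + α ^ 2) * Real.pi ^ 2
          / (α ^ 2 * (Real.exp (Real.pi / α) - Real.exp (-Real.pi / α)) ^ 2 * μ)) * s * h
        + ((1 + α ^ 2) * Real.pi ^ 2
          / (α * (Real.exp (Real.pi / α) - Real.exp (-Real.pi / α)) ^ 2 * μ
            * Real.sqrt (-μ))) * h ^ 2 < 0) ∧
    (∀ s h : ℝ,
      -((1 + α ^ 2) ^ 2 * (4 + α ^ 2) * Real.pi ^ 2
          / (α ^ 3 * (Real.exp (Real.pi / α) - Real.exp (-Real.pi / α)) ^ 2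
            * Real.sqrt (-μ))) * s ^ 2
        - (2 * (1 + α ^ 2) * (2 + α ^ 2) * Real.pi ^ 2
          / (α ^ 2 * (Real.exp (Real.pi / α) - Real.exp (-Real.pi / α)) ^ 2 * μ)) * s * h
        + ((1 + α ^ 2) * Real.pi ^ 2
          / (α * (Real.exp (Real.pi / α) - Real.exp (-Real.pi / α)) ^ 2 * μ
            * Real.sqrt (-μ))) * h ^ 2 = 0 → s = 0 ∧ h = 0) := by
  have hρ : 0 < Real.exp (Real.pi / α) - Real.exp (-Real.pi / α) := by
    have h1 : -Real.pi / α < Real.pi / α := by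
      have h2 : 0 < Real.pi / α := by positivity
      rw [neg_div]
      linarith
    linarith [Real.exp_lt_exp.2 h1]
  set ρ := Real.exp (Real.pi / α) - Real.exp (-Real.pi / α) with hρdef
  have hν : 0 < Real.sqrt (-μ) := Real.sqrt_pos.2 (by linarith)
  set ν := Real.sqrt (-μ) with hνdef
  have hν2 : ν ^ 2 = -μ := Real.sq_sqrt (by linarith)
  have hμeq : μ = -ν ^ 2 := by linarith
  have hπ := Real.pi_pos
  have key : ∀ s h : ℝ, ¬(s = 0 ∧ h = 0) →
      -((1 + α ^ 2) ^ 2 * (4 + α ^ 2) * Real.pi ^ 2 / (α ^ 3 * ρ ^ 2 * ν)) * s ^ 2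
        - (2 * (1 + α ^ 2) * (2 + α ^ 2) * Real.pi ^ 2 / (α ^ 2 * ρ ^ 2 * μ)) * s * h
        + ((1 + α ^ 2) * Real.pi ^ 2 / (α * ρ ^ 2 * μ * ν)) * h ^ 2 < 0 := by
    intro s h hne
    have hEq : -((1 + α ^ 2) ^ 2 * (4 + α ^ 2) * Real.pi ^ 2 / (α ^ 3 * ρ ^ 2 * ν)) * s ^ 2
        - (2 * (1 + α ^ 2) * (2 + α ^ 2) * Real.pi ^ 2 / (α ^ 2 * ρ ^ 2 * μ)) * s * h
        + ((1 + α ^ 2) * Real.pi ^ 2 / (α * ρ ^ 2 * μ * ν)) * h ^ 2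
        = -(Real.pi ^ 2 * (1 + α ^ 2) *
            ((1 + α ^ 2) * (4 + α ^ 2) * (ν * s) ^ 2
              - 2 * α * (2 + α ^ 2) * (ν * s) * h + α ^ 2 * h ^ 2))
          / (α ^ 3 * ρ ^ 2 * ν ^ 3) := by
      rw [hμeq]
      field_simp
      ring
    rw [hEq]
    apply div_neg_of_neg_of_pos
    · have hinner : 0 < (1 + α ^ 2) * (4 + α ^ 2) * (ν * s) ^ 2
          - 2 * α * (2 + α ^ 2) * (ν * s) * h + α ^ 2 * h ^ 2 := by
        rcases eq_or_ne h 0 with rfl | hh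
        · have hs : s ≠ 0 := by tauto
          have : (ν * s) ^ 2 > 0 := by positivity
          nlinarith
        · have hh2 : 0 < h ^ 2 := by positivity
          nlinarith [sq_nonneg ((1 + α ^ 2) * (4 + α ^ 2) * (ν * s) - α * (2 + α ^ 2) * h),
            mul_pos (mul_pos (mul_pos hα hα) (mul_pos hα hα)) hh2,
            mul_pos (show (0:ℝ) < (1 + α ^ 2) * (4 + α ^ 2) by positivity)
              (show (0:ℝ) < 1 by norm_num)]
      nlinarith [mul_pos (show (0:ℝ) < Real.pi ^ 2 * (1 + α ^ 2) by positivity) hinner]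
    · positivity
  refine ⟨key, ?_⟩
  intro s h hQ0
  by_contra hne
  exact absurd hQ0 (ne_of_lt (key s h hne))
end

section
/- The function g(z) = [(1 - e^{2√(-μ)z})·e^{(αs₀+2√(-μ))z}·e^{-i s₀ z}]/(1 + e^{2√(-μ)z})³ (μ < 0, α, s₀ real) has a pole of order three at z = iπ/(2√(-μ)) with residue -[(α-i)²s₀²/(8μ√(-μ))]·exp((α-i)·iπs₀/(2√(-μ))). -/
/-!
Put `ν = √(-μ)`, `c = 2ν`, `z₀ = iπ/c` and `β = αs₀ + c - is₀`, so that `e^{cz₀} = -1` and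
`g(z) = (1 - e^{cz}) e^{βz} / (1 + e^{cz})³`. Writing `1 + e^{cz} = (z - z₀) ψ(z)` with
`ψ(z) = (e^{cz} - e^{cz₀}) / (z - z₀)` analytic and `ψ(z₀) = -c ≠ 0`, we get
`g(z) = F(z) / (z - z₀)³` with `F = (1 - e^{cz}) e^{βz} ψ⁻³` analytic at `z₀`. The residue is the
second Taylor coefficient of `F`, obtained by multiplying and inverting second-order expansions:
`F(z) = -(e^{βz₀}/c³) (2 + 2(β - c)(z - z₀) + (β - c)²(z - z₀)² + O((z - z₀)³))`.
-/

open Complex Filter Function FormalMultilinearSeries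
open scoped Topology

section
variable {𝕜 : Type*} [NontriviallyNormedField 𝕜] {f g : 𝕜 → 𝕜} {z₀ a b c a' b' c' : 𝕜}

/-- The identity is only required off `z₀`, so that quotients by `z - z₀` (junk-valued at `z₀`)
are covered. -/
def HasSecondOrderExpansionAt (f : 𝕜 → 𝕜) (z₀ a b c : 𝕜) : Prop :=
  ∃ r : 𝕜 → 𝕜, AnalyticAt 𝕜 r z₀ ∧
    ∀ᶠ z in 𝓝[≠] z₀, f z = a + b * (z - z₀) + c * (z - z₀) ^ 2 + (z - z₀) ^ 3 * r z

namespace HasSecondOrderExpansionAt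

theorem const_sub (hf : HasSecondOrderExpansionAt f z₀ a b c) (d : 𝕜) :
    HasSecondOrderExpansionAt (fun z => d - f z) z₀ (d - a) (-b) (-c) := by
  obtain ⟨r, hr, hfr⟩ := hf
  refine ⟨-r, hr.neg, hfr.mono fun z hz => ?_⟩
  simp only [hz, Pi.neg_apply]
  ring

theorem mul (hf : HasSecondOrderExpansionAt f z₀ a b c)
    (hg : HasSecondOrderExpansionAt g z₀ a' b' c') :
    HasSecondOrderExpansionAt (fun z => f z * g z) z₀
      (a * a') (a * b' + b * a') (a * c' + b * b' + c * a') := by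
  obtain ⟨r, hr, hfr⟩ := hf
  obtain ⟨s, hs, hgs⟩ := hg
  refine ⟨fun z => b * c' + c * b' + c * c' * (z - z₀)
      + (a + b * (z - z₀) + c * (z - z₀) ^ 2) * s z
      + (a' + b' * (z - z₀) + c' * (z - z₀) ^ 2) * r z + (z - z₀) ^ 3 * r z * s z,
    by fun_prop, (hfr.and hgs).mono fun z ⟨hz, hz'⟩ => ?_⟩
  simp only [hz, hz']
  ring

theorem inv (hf : HasSecondOrderExpansionAt f z₀ a b c) (ha : a ≠ 0) :
    HasSecondOrderExpansionAt (fun z => (f z)⁻¹) z₀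
      a⁻¹ (-b / a ^ 2) ((b ^ 2 - a * c) / a ^ 3) := by
  obtain ⟨r, hr, hfr⟩ := hf
  let F : 𝕜 → 𝕜 := fun z => a + b * (z - z₀) + c * (z - z₀) ^ 2 + (z - z₀) ^ 3 * r z
  let Q : 𝕜 → 𝕜 := fun z => a⁻¹ + -b / a ^ 2 * (z - z₀) + (b ^ 2 - a * c) / a ^ 3 * (z - z₀) ^ 2
  let S : 𝕜 → 𝕜 := fun z => b * (b ^ 2 - a * c) / a ^ 3 - b * c / a ^ 2
    + c * (b ^ 2 - a * c) / a ^ 3 * (z - z₀) + r z * Q z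
  have hFQ (z : 𝕜) : F z * Q z = 1 + (z - z₀) ^ 3 * S z := by
    simp only [F, Q, S]
    field_simp
    ring
  have hF : AnalyticAt 𝕜 F z₀ := by fun_prop
  have hF₀ : F z₀ ≠ 0 := by simpa [F] using ha
  refine ⟨fun z => -S z / F z, by fun_prop (disch := exact hF₀), ?_⟩
  filter_upwards [hfr, nhdsWithin_le_nhds (hF.continuousAt.eventually_ne hF₀)] with z hz hFz
  change (f z)⁻¹ = Q z + _
  rw [hz]
  refine inv_eq_of_mul_eq_one_right ?_
  linear_combination hFQ z + (z - z₀) ^ 3 * mul_div_cancel₀ (-S z) hFz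

theorem exists_div_sub_pow_three_eq (hf : HasSecondOrderExpansionAt f z₀ a b c) :
    ∃ h : 𝕜 → 𝕜, AnalyticAt 𝕜 h z₀ ∧ ∀ᶠ z in 𝓝[≠] z₀,
      f z / (z - z₀) ^ 3 = a / (z - z₀) ^ 3 + b / (z - z₀) ^ 2 + c / (z - z₀) + h z := by
  obtain ⟨r, hr, hfr⟩ := hf
  refine ⟨r, hr, ?_⟩
  filter_upwards [hfr, self_mem_nhdsWithin] with z hz hne
  have hw : z - z₀ ≠ 0 := sub_ne_zero.mpr hne
  rw [hz]
  field_simp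

end HasSecondOrderExpansionAt

theorem HasFPowerSeriesAt.iterate_dslope_eq_coeff_add {p : FormalMultilinearSeries 𝕜 𝕜 𝕜}
    (hp : HasFPowerSeriesAt f p z₀) (n : ℕ) (z : 𝕜) :
    (swap dslope z₀)^[n] f z = p.coeff n + (z - z₀) * (swap dslope z₀)^[n + 1] f z := by
  rw [iterate_succ_apply', Function.swap, ← smul_eq_mul, sub_smul_dslope,
    ← (hp.has_fpower_series_iterate_dslope_fslope n).coeff_zero 1, ← coeff, coeff_iterate_fslope,
    zero_add, add_sub_cancel]

theorem HasFPowerSeriesAt.hasSecondOrderExpansionAt {p : FormalMultilinearSeries 𝕜 𝕜 𝕜}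
    (hp : HasFPowerSeriesAt f p z₀) :
    HasSecondOrderExpansionAt f z₀ (p.coeff 0) (p.coeff 1) (p.coeff 2) := by
  refine ⟨(swap dslope z₀)^[3] f, ⟨_, hp.has_fpower_series_iterate_dslope_fslope 3⟩,
    .of_forall fun z => ?_⟩
  have h0 := hp.iterate_dslope_eq_coeff_add 0 z
  have h1 := hp.iterate_dslope_eq_coeff_add 1 z
  have h2 := hp.iterate_dslope_eq_coeff_add 2 z
  rw [iterate_zero_apply] at h0
  linear_combination h0 + (z - z₀) * h1 + (z - z₀) ^ 2 * h2

theorem HasFPowerSeriesAt.hasSecondOrderExpansionAt_slope {p : FormalMultilinearSeries 𝕜 𝕜 𝕜}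
    (hp : HasFPowerSeriesAt f p z₀) :
    HasSecondOrderExpansionAt (fun z => (f z - f z₀) / (z - z₀)) z₀
      (p.coeff 1) (p.coeff 2) (p.coeff 3) := by
  obtain ⟨r, hr, hfr⟩ := hp.has_fpower_series_dslope_fslope.hasSecondOrderExpansionAt
  refine ⟨r, hr, ?_⟩
  filter_upwards [hfr, self_mem_nhdsWithin] with z hz hne
  simpa only [dslope_of_ne f hne, slope_def_field, coeff_fslope] using hz

end

theorem hasFPowerSeriesAt_cexp_const_mul (k z₀ : ℂ) :
    HasFPowerSeriesAt (fun z => cexp (k * z))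
      (ofScalars ℂ fun n => k ^ n * cexp (k * z₀) / n.factorial) z₀ := by
  simpa only [iteratedDeriv_cexp_const_mul] using
    (show AnalyticAt ℂ (fun z => cexp (k * z)) z₀ by fun_prop).hasFPowerSeriesAt

theorem hasSecondOrderExpansionAt_cexp_const_mul (k z₀ : ℂ) :
    HasSecondOrderExpansionAt (fun z => cexp (k * z)) z₀
      (cexp (k * z₀)) (k * cexp (k * z₀)) (k ^ 2 * cexp (k * z₀) / 2) := by
  simpa [coeff_ofScalars] using (hasFPowerSeriesAt_cexp_const_mul k z₀).hasSecondOrderExpansionAt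

theorem hasSecondOrderExpansionAt_cexp_const_mul_slope (k z₀ : ℂ) :
    HasSecondOrderExpansionAt (fun z => (cexp (k * z) - cexp (k * z₀)) / (z - z₀)) z₀
      (k * cexp (k * z₀)) (k ^ 2 * cexp (k * z₀) / 2) (k ^ 3 * cexp (k * z₀) / 6) := by
  simpa [coeff_ofScalars, Nat.factorial] using
    (hasFPowerSeriesAt_cexp_const_mul k z₀).hasSecondOrderExpansionAt_slope

theorem exists_triple_pole_expansion_of_cexp_eq_neg_one (c β z₀ : ℂ) (hc : c ≠ 0)
    (hz₀ : cexp (c * z₀) = -1) :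
    ∃ h : ℂ → ℂ, AnalyticAt ℂ h z₀ ∧
      ∀ᶠ z in 𝓝[≠] z₀, (1 - cexp (c * z)) * cexp (β * z) / (1 + cexp (c * z)) ^ 3
        = -2 * cexp (β * z₀) / c ^ 3 / (z - z₀) ^ 3
          + -2 * (β - c) * cexp (β * z₀) / c ^ 3 / (z - z₀) ^ 2
          + -((β - c) ^ 2 * cexp (β * z₀) / c ^ 3) / (z - z₀) + h z := by
  have hN := ((hasSecondOrderExpansionAt_cexp_const_mul c z₀).const_sub 1).mul
    (hasSecondOrderExpansionAt_cexp_const_mul β z₀)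
  have hψ := hasSecondOrderExpansionAt_cexp_const_mul_slope c z₀
  have hF : HasSecondOrderExpansionAt
      (fun z => (1 - cexp (c * z)) * cexp (β * z) * (((cexp (c * z) + 1) / (z - z₀)) ^ 3)⁻¹) z₀
      (-2 * cexp (β * z₀) / c ^ 3) (-2 * (β - c) * cexp (β * z₀) / c ^ 3)
      (-((β - c) ^ 2 * cexp (β * z₀) / c ^ 3)) := by
    convert hN.mul (((hψ.mul hψ).mul hψ).inv (by simp [hz₀, hc])) using 1
    · ext z
      rw [hz₀]
      ring
    all_goals rw [hz₀]; field_simp; ring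
  obtain ⟨h, hh, hFh⟩ := hF.exists_div_sub_pow_three_eq
  refine ⟨h, hh, ?_⟩
  filter_upwards [hFh, self_mem_nhdsWithin] with z hz hne
  have hw : z - z₀ ≠ 0 := sub_ne_zero.mpr hne
  rw [← hz]
  field_simp
  ring

/-- The meromorphic function
`g(z) = (1 - e^{2√(-μ)z})·e^{(αs₀+2√(-μ))z}·e^{-is₀z}/(1 + e^{2√(-μ)z})³`
has a pole of order three at `z₀ = iπ/(2√(-μ))` with residue
`-[(α-i)²s₀²/(8μ√(-μ))]·exp((α-i)·iπs₀/(2√(-μ)))`: near `z₀` it decomposes as a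
principal part of exact order three whose simple-pole coefficient is the stated residue,
plus an analytic function. -/
theorem melnikov_pole_order_three_residue (α μ s₀ : ℝ) (hμ : μ < 0) :
    ∃ (c₃ c₂ : ℂ) (hfun : ℂ → ℂ),
      c₃ ≠ 0 ∧ AnalyticAt ℂ hfun (Complex.I * Real.pi / (2 * Real.sqrt (-μ))) ∧
      ∀ᶠ z in nhdsWithin (Complex.I * Real.pi / (2 * Real.sqrt (-μ)))
          {(Complex.I * Real.pi / (2 * Real.sqrt (-μ)))}ᶜ,
        (1 - Complex.exp (2 * Real.sqrt (-μ) * z))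
            * Complex.exp ((α * s₀ + 2 * Real.sqrt (-μ)) * z)
            * Complex.exp (-Complex.I * s₀ * z)
            / (1 + Complex.exp (2 * Real.sqrt (-μ) * z)) ^ 3
          = c₃ / (z - Complex.I * Real.pi / (2 * Real.sqrt (-μ))) ^ 3
            + c₂ / (z - Complex.I * Real.pi / (2 * Real.sqrt (-μ))) ^ 2
            + (-(((α : ℂ) - Complex.I) ^ 2 * (s₀ : ℂ) ^ 2 / (8 * μ * Real.sqrt (-μ)))
                * Complex.exp (((α : ℂ) - Complex.I) * Complex.I * Real.pi * s₀
                    / (2 * Real.sqrt (-μ))))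
              / (z - Complex.I * Real.pi / (2 * Real.sqrt (-μ)))
            + hfun z := by
  have hν : (Real.sqrt (-μ) : ℂ) ≠ 0 :=
    ofReal_ne_zero.mpr (Real.sqrt_pos.mpr (neg_pos.mpr hμ)).ne'
  have hμν : (μ : ℂ) = -(Real.sqrt (-μ) : ℂ) ^ 2 := by
    rw [← ofReal_pow, Real.sq_sqrt (neg_nonneg.mpr hμ.le)]
    push_cast
    ring
  set ν : ℂ := (Real.sqrt (-μ) : ℂ)
  set z₀ := I * Real.pi / (2 * ν)
  set β : ℂ := α * s₀ + 2 * ν - I * s₀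
  have hz₀ : cexp (2 * ν * z₀) = -1 := by
    rw [show 2 * ν * z₀ = Real.pi * I by simp only [z₀]; field_simp, exp_pi_mul_I]
  have hβz₀ : cexp (β * z₀) = -cexp ((α - I) * I * Real.pi * s₀ / (2 * ν)) := by
    rw [show β * z₀ = (α - I) * I * Real.pi * s₀ / (2 * ν) + Real.pi * I by
      simp only [β, z₀]; field_simp; ring, exp_add, exp_pi_mul_I]
    ring
  obtain ⟨h, hh, hlaurent⟩ :=
    exists_triple_pole_expansion_of_cexp_eq_neg_one (2 * ν) β z₀ (by simpa using hν) hz₀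
  refine ⟨-2 * cexp (β * z₀) / (2 * ν) ^ 3, -2 * (β - 2 * ν) * cexp (β * z₀) / (2 * ν) ^ 3, h,
    by simp [hν, exp_ne_zero], hh, hlaurent.mono fun z hz => ?_⟩
  rw [mul_assoc, ← exp_add, ← add_mul, show α * s₀ + 2 * ν + -I * s₀ = β by ring, hz, hβz₀, hμν]
  congr 3
  field_simp
  ring
end

section
/- The functions r(ξ)·(cos(-s₀ξ), sin(-s₀ξ)) and r(ξ)·(-sin(-s₀ξ), cos(-s₀ξ)), with r(ξ) = (1 + e^{2√(-μ)ξ})²·e^{(-2√(-μ)-αs₀)ξ}, are solutions of the planar linear system p' = -(αs₀ + 2√(-μ)cos(θ₀(ξ)))p + s₀q, q' = -s₀p - (αs₀ + 2√(-μ)cos(θ₀(ξ)))q, where θ₀(ξ) = 2 arctan(e^{√(-μ)ξ}), and they are linearly independent at each ξ. -/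
/-!
With `k = √(-μ)`, the double-angle formula gives `cos θ₀(ξ) = (1 - e^{2kξ}) / (1 + e^{2kξ})`,
and a direct differentiation shows that `r` solves the scalar equation
`r' = -(αs₀ + 2k cos θ₀) r`. The system is this scalar damping plus a rotation with angular
speed `-s₀`, so multiplying `r` by the rotating frame `(cos(-s₀ξ), sin(-s₀ξ))` and its
quarter-turn gives solutions; they are independent because `r > 0` and a rotation matrix
has determinant `1`.
-/

open Real

theorem Real.cos_two_mul_arctan (x : ℝ) : cos (2 * arctan x) = (1 - x ^ 2) / (1 + x ^ 2) := by
  rw [cos_two_mul, cos_sq_arctan]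
  field_simp
  ring

theorem Real.cos_two_mul_arctan_exp (k ξ : ℝ) :
    cos (2 * arctan (exp (k * ξ))) = (1 - exp (2 * k * ξ)) / (1 + exp (2 * k * ξ)) := by
  rw [cos_two_mul_arctan, ← exp_nat_mul]
  ring_nf

theorem hasDerivAt_domainWall_amplitude (k c ξ : ℝ) :
    HasDerivAt (fun ξ => (1 + exp (2 * k * ξ)) ^ 2 * exp ((-2 * k - c) * ξ))
      (-(c + 2 * k * cos (2 * arctan (exp (k * ξ))))
        * ((1 + exp (2 * k * ξ)) ^ 2 * exp ((-2 * k - c) * ξ))) ξ := by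
  have hsum : HasDerivAt (fun ξ => 1 + exp (2 * k * ξ)) (exp (2 * k * ξ) * (2 * k)) ξ := by
    simpa using (((hasDerivAt_id ξ).const_mul (2 * k)).exp.const_add 1)
  have hdecay : HasDerivAt (fun ξ => exp ((-2 * k - c) * ξ))
      (exp ((-2 * k - c) * ξ) * (-2 * k - c)) ξ := by
    simpa using ((hasDerivAt_id ξ).const_mul (-2 * k - c)).exp
  refine ((hsum.fun_pow 2).mul hdecay).congr_deriv ?_
  rw [cos_two_mul_arctan_exp]
  field_simp
  ring

section RotatingFrame

variable {r : ℝ → ℝ} {g s₀ ξ : ℝ}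

theorem HasDerivAt.mul_cos_neg_mul (hr : HasDerivAt r (-g * r ξ) ξ) :
    HasDerivAt (fun x => r x * Real.cos (-s₀ * x))
      (-g * (r ξ * Real.cos (-s₀ * ξ)) + s₀ * (r ξ * Real.sin (-s₀ * ξ))) ξ := by
  have hc := ((hasDerivAt_id ξ).const_mul (-s₀)).cos
  exact (hr.mul hc).congr_deriv (by simp only [id]; ring)

theorem HasDerivAt.mul_sin_neg_mul (hr : HasDerivAt r (-g * r ξ) ξ) :
    HasDerivAt (fun x => r x * Real.sin (-s₀ * x))
      (-s₀ * (r ξ * Real.cos (-s₀ * ξ)) - g * (r ξ * Real.sin (-s₀ * ξ))) ξ := by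
  have hs := ((hasDerivAt_id ξ).const_mul (-s₀)).sin
  exact (hr.mul hs).congr_deriv (by simp only [id]; ring)

end RotatingFrame

theorem linearIndependent_smul_rotation_columns {r : ℝ} (hr : r ≠ 0) (φ : ℝ) :
    LinearIndependent ℝ
      ![((r * cos φ, r * sin φ) : ℝ × ℝ), ((r * (-sin φ), r * cos φ) : ℝ × ℝ)] := by
  rw [LinearIndependent.pair_iff]
  intro a b hab
  have hfst : a * (r * cos φ) + b * (r * (-sin φ)) = 0 := by simpa using congrArg Prod.fst hab
  have hsnd : a * (r * sin φ) + b * (r * cos φ) = 0 := by simpa using congrArg Prod.snd hab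
  have pyth := sin_sq_add_cos_sq φ
  have ha : a * r = 0 := by linear_combination cos φ * hfst + sin φ * hsnd - a * r * pyth
  have hb : b * r = 0 := by linear_combination -sin φ * hfst + cos φ * hsnd - b * r * pyth
  exact ⟨(mul_eq_zero.1 ha).resolve_right hr, (mul_eq_zero.1 hb).resolve_right hr⟩

theorem variational_solutions_and_independence_general (α μ s₀ : ℝ)
    (r θ₀ : ℝ → ℝ)
    (hr : r = fun ξ => (1 + Real.exp (2 * Real.sqrt (-μ) * ξ)) ^ 2
      * Real.exp ((-2 * Real.sqrt (-μ) - α * s₀) * ξ))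
    (hθ : θ₀ = fun ξ => 2 * Real.arctan (Real.exp (Real.sqrt (-μ) * ξ))) :
    ∀ ξ : ℝ,
      HasDerivAt (fun ξ => r ξ * Real.cos (-s₀ * ξ))
        (-(α * s₀ + 2 * Real.sqrt (-μ) * Real.cos (θ₀ ξ)) * (r ξ * Real.cos (-s₀ * ξ))
          + s₀ * (r ξ * Real.sin (-s₀ * ξ))) ξ ∧
      HasDerivAt (fun ξ => r ξ * Real.sin (-s₀ * ξ))
        (-s₀ * (r ξ * Real.cos (-s₀ * ξ))
          - (α * s₀ + 2 * Real.sqrt (-μ) * Real.cos (θ₀ ξ)) * (r ξ * Real.sin (-s₀ * ξ))) ξ ∧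
      HasDerivAt (fun ξ => r ξ * (-Real.sin (-s₀ * ξ)))
        (-(α * s₀ + 2 * Real.sqrt (-μ) * Real.cos (θ₀ ξ)) * (r ξ * (-Real.sin (-s₀ * ξ)))
          + s₀ * (r ξ * Real.cos (-s₀ * ξ))) ξ ∧
      HasDerivAt (fun ξ => r ξ * Real.cos (-s₀ * ξ))
        (-s₀ * (r ξ * (-Real.sin (-s₀ * ξ)))
          - (α * s₀ + 2 * Real.sqrt (-μ) * Real.cos (θ₀ ξ)) * (r ξ * Real.cos (-s₀ * ξ))) ξ ∧
      LinearIndependent ℝ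
        ![((r ξ * Real.cos (-s₀ * ξ), r ξ * Real.sin (-s₀ * ξ)) : ℝ × ℝ),
          ((r ξ * (-Real.sin (-s₀ * ξ)), r ξ * Real.cos (-s₀ * ξ)) : ℝ × ℝ)] := by
  intro ξ
  subst hr hθ
  beta_reduce
  have hamp := hasDerivAt_domainWall_amplitude (Real.sqrt (-μ)) (α * s₀) ξ
  have hcos := hamp.mul_cos_neg_mul (s₀ := s₀)
  have hsin := hamp.mul_sin_neg_mul (s₀ := s₀)
  refine ⟨hcos, hsin, ?_, hcos.congr_deriv (by ring), ?_⟩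
  · have hnegsin := hsin.fun_neg
    simp only [← mul_neg] at hnegsin
    exact hnegsin.congr_deriv (by ring)
  · exact linearIndependent_smul_rotation_columns (by positivity) _

/-- The functions `r(ξ)(cos(-s₀ξ), sin(-s₀ξ))` and `r(ξ)(-sin(-s₀ξ), cos(-s₀ξ))`, with
`r(ξ) = (1+e^{2√(-μ)ξ})²e^{(-2√(-μ)-αs₀)ξ}`, solve the variational system
`p' = -(αs₀ + 2√(-μ)cos θ₀)p + s₀ q`, `q' = -s₀ p - (αs₀ + 2√(-μ)cos θ₀)q` along the
homogeneous domain wall `θ₀(ξ) = 2 arctan(e^{√(-μ)ξ})`, and are linearly independent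
at each `ξ`. -/
theorem variational_solutions_and_independence (α μ s₀ : ℝ) (hα : 0 < α) (hμ : μ < 0)
    (r θ₀ : ℝ → ℝ)
    (hr : r = fun ξ => (1 + Real.exp (2 * Real.sqrt (-μ) * ξ)) ^ 2
      * Real.exp ((-2 * Real.sqrt (-μ) - α * s₀) * ξ))
    (hθ : θ₀ = fun ξ => 2 * Real.arctan (Real.exp (Real.sqrt (-μ) * ξ))) :
    ∀ ξ : ℝ,
      HasDerivAt (fun ξ => r ξ * Real.cos (-s₀ * ξ))
        (-(α * s₀ + 2 * Real.sqrt (-μ) * Real.cos (θ₀ ξ)) * (r ξ * Real.cos (-s₀ * ξ))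
          + s₀ * (r ξ * Real.sin (-s₀ * ξ))) ξ ∧
      HasDerivAt (fun ξ => r ξ * Real.sin (-s₀ * ξ))
        (-s₀ * (r ξ * Real.cos (-s₀ * ξ))
          - (α * s₀ + 2 * Real.sqrt (-μ) * Real.cos (θ₀ ξ)) * (r ξ * Real.sin (-s₀ * ξ))) ξ ∧
      HasDerivAt (fun ξ => r ξ * (-Real.sin (-s₀ * ξ)))
        (-(α * s₀ + 2 * Real.sqrt (-μ) * Real.cos (θ₀ ξ)) * (r ξ * (-Real.sin (-s₀ * ξ)))
          + s₀ * (r ξ * Real.cos (-s₀ * ξ))) ξ ∧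
      HasDerivAt (fun ξ => r ξ * Real.cos (-s₀ * ξ))
        (-s₀ * (r ξ * (-Real.sin (-s₀ * ξ)))
          - (α * s₀ + 2 * Real.sqrt (-μ) * Real.cos (θ₀ ξ)) * (r ξ * Real.cos (-s₀ * ξ))) ξ ∧
      LinearIndependent ℝ
        ![((r ξ * Real.cos (-s₀ * ξ), r ξ * Real.sin (-s₀ * ξ)) : ℝ × ℝ),
          ((r ξ * (-Real.sin (-s₀ * ξ)), r ξ * Real.cos (-s₀ * ξ)) : ℝ × ℝ)] :=
  variational_solutions_and_independence_general α μ s₀ r θ₀ hr hθ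
end
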